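/- arXiv:1602.03229 — 2 statements merged into one kernel-verified Lean document; each statement's English description precedes it below -/
import Mathlib

section
/- Let G be a group and H₁, H₂ subgroups. The following are equivalent: (1) there exists a finite-index subgroup D ≤ G containing H₁ such that no conjugate of H₂ is contained in D; (2) there exists a homomorphism φ from G onto a finite group such that no conjugate of φ(H₂) is contained in φ(H₁). -/
/-- The conjugate subgroup `c⁻¹ H c`. -/
def conjBy {G : Type*} [Group G] (c : G) (H : Subgroup G) : Subgroup G :=
  H.map (MulAut.conj c⁻¹).toMonoidHom

lemma mem_conjBy {G : Type*} [Group G] {c x : G} {H : Subgroup G} :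
    x ∈ conjBy c H ↔ ∃ h ∈ H, c⁻¹ * h * c = x := by
  simp [conjBy, Subgroup.mem_map, MulAut.conj_apply, mul_assoc]

lemma map_conjBy {G K : Type*} [Group G] [Group K] (f : G →* K) (g : G) (H : Subgroup G) :
    (conjBy g H).map f = conjBy (f g) (H.map f) := by
  ext x
  simp only [Subgroup.mem_map, mem_conjBy]
  constructor
  · rintro ⟨y, ⟨h, hh, rfl⟩, rfl⟩
    exact ⟨f h, ⟨h, hh, rfl⟩, by simp [mul_assoc]⟩
  · rintro ⟨y, ⟨h, hh, rfl⟩, rfl⟩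
    exact ⟨g⁻¹ * h * g, ⟨h, hh, rfl⟩, by simp [mul_assoc]⟩

/-- `H₁` is con-separated from `H₂` within `G` iff some finite quotient of `G`
witnesses that `H₂` is not conjugate into `H₁`. -/
theorem stmt_4 {G : Type*} [Group G] (H₁ H₂ : Subgroup G) :
    (∃ D : Subgroup G, D.index ≠ 0 ∧ H₁ ≤ D ∧ ∀ g : G, ¬ conjBy g H₂ ≤ D) ↔
    (∃ (N : Subgroup G) (hN : N.Normal),
      haveI := hN
      Finite (G ⧸ N) ∧
        ∀ q : G ⧸ N, ¬ conjBy q (H₂.map (QuotientGroup.mk' N)) ≤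
          H₁.map (QuotientGroup.mk' N)) := by
  constructor
  · rintro ⟨D, hD, hH₁, hconj⟩
    haveI : D.FiniteIndex := ⟨hD⟩
    refine ⟨D.normalCore, D.normalCore_normal, ?_, ?_⟩
    · infer_instance
    · intro q hq
      obtain ⟨g, rfl⟩ := QuotientGroup.mk'_surjective D.normalCore q
      apply hconj g
      rw [← map_conjBy] at hq
      calc conjBy g H₂ ≤ ((conjBy g H₂).map (QuotientGroup.mk' D.normalCore)).comap
            (QuotientGroup.mk' D.normalCore) := Subgroup.le_comap_map _ _
        _ ≤ (H₁.map (QuotientGroup.mk' D.normalCore)).comap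
            (QuotientGroup.mk' D.normalCore) := Subgroup.comap_mono hq
        _ ≤ (D.map (QuotientGroup.mk' D.normalCore)).comap
            (QuotientGroup.mk' D.normalCore) :=
              Subgroup.comap_mono (Subgroup.map_mono hH₁)
        _ = D ⊔ D.normalCore := by
              rw [Subgroup.comap_map_eq, QuotientGroup.ker_mk']
        _ = D := sup_eq_left.mpr D.normalCore_le
  · rintro ⟨N, hN, hfin, hconj⟩
    haveI := hN
    haveI := hfin
    refine ⟨(H₁.map (QuotientGroup.mk' N)).comap (QuotientGroup.mk' N), ?_, ?_, ?_⟩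
    · rw [Subgroup.index_comap_of_surjective _ (QuotientGroup.mk'_surjective N)]
      exact Subgroup.index_ne_zero_of_finite
    · exact Subgroup.le_comap_map _ _
    · intro g hg
      apply hconj (QuotientGroup.mk' N g)
      rw [← map_conjBy]
      exact (Subgroup.map_le_iff_le_comap.mpr hg)
end

section
/- Let G be a group and H₁, H₂ finitely generated subgroups such that H₂ is not conjugate into H₁. If there exists a homomorphism φ from G onto a finite group Ḡ such that φ(H₂) is not conjugate into φ(H₁) in Ḡ, then in particular φ(H₂) is not conjugate to φ(H₁) in Ḡ; consequently, any group G that is SICS and admits no expanding inner automorphisms satisfies: for all non-conjugate finitely generated H₁, H₂ ≤ G, there is a finite quotient separating the conjugacy classes of their images. -/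
/-- `G` is subgroup into-conjugacy separable. -/
def SICS (G : Type*) [Group G] : Prop :=
  ∀ H₁ H₂ : Subgroup G, H₁.FG → H₂.FG → (∀ g : G, ¬ conjBy g H₂ ≤ H₁) →
    ∃ (N : Subgroup G) (hN : N.Normal),
      haveI := hN
      Finite (G ⧸ N) ∧
        ∀ q : G ⧸ N, ¬ conjBy q (H₂.map (QuotientGroup.mk' N)) ≤
          H₁.map (QuotientGroup.mk' N)

lemma conjBy_conjBy {G : Type*} [Group G] (a b : G) (H : Subgroup G) :
    conjBy a (conjBy b H) = conjBy (b * a) H := by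
  simp only [conjBy, Subgroup.map_map]
  congr 1
  ext x
  simp [mul_assoc]

lemma conjBy_one {G : Type*} [Group G] (H : Subgroup G) : conjBy 1 H = H := by
  simp only [conjBy]
  ext x
  simp

lemma conjBy_mono {G : Type*} [Group G] (a : G) {H K : Subgroup G} (h : H ≤ K) :
    conjBy a H ≤ conjBy a K := Subgroup.map_mono h

lemma conjBy_inj {G : Type*} [Group G] (a : G) {H K : Subgroup G}
    (h : conjBy a H = conjBy a K) : H = K := by
  have := congrArg (conjBy a⁻¹) h
  rwa [conjBy_conjBy, conjBy_conjBy, mul_inv_cancel, conjBy_one, conjBy_one] at this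

/-- If a finite quotient witnesses that the image of `H₂` is not conjugate *into* the
image of `H₁`, it in particular witnesses that the images are not conjugate; hence any
SICS group without expanding inner automorphisms separates conjugacy classes of
non-conjugate finitely generated subgroups in finite quotients. -/
theorem stmt_17 {G : Type*} [Group G] :
    (∀ H₁ H₂ : Subgroup G, H₁.FG → H₂.FG → (∀ g : G, ¬ conjBy g H₂ ≤ H₁) →
      ∀ (Q : Type) [Group Q] [Finite Q] (φ : G →* Q), Function.Surjective φ →
        (∀ q : Q, ¬ conjBy q (H₂.map φ) ≤ H₁.map φ) →
          ∀ q : Q, conjBy q (H₂.map φ) ≠ H₁.map φ) ∧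
    ((¬ ∃ (H : Subgroup G) (g : G), H.FG ∧ H < conjBy g H) → SICS G →
      ∀ H₁ H₂ : Subgroup G, H₁.FG → H₂.FG → (∀ g : G, conjBy g H₂ ≠ H₁) →
        ∃ (N : Subgroup G) (hN : N.Normal),
          haveI := hN
          Finite (G ⧸ N) ∧
            ∀ q : G ⧸ N, conjBy q (H₂.map (QuotientGroup.mk' N)) ≠
              H₁.map (QuotientGroup.mk' N)) := by
  constructor
  · intro H₁ H₂ _ _ _ Q _ _ φ _ hq q heq
    exact hq q (le_of_eq heq)
  · intro hexp hsics H₁ H₂ h1 h2 hne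
    by_cases hc : ∀ g : G, ¬ conjBy g H₂ ≤ H₁
    · obtain ⟨N, hN, hfin, hq⟩ := hsics H₁ H₂ h1 h2 hc
      exact ⟨N, hN, hfin, fun q heq => hq q (le_of_eq heq)⟩
    · push_neg at hc
      obtain ⟨g, hg⟩ := hc
      have hc' : ∀ g' : G, ¬ conjBy g' H₁ ≤ H₂ := by
        intro g' hg'
        have h3 : conjBy (g * g') H₂ ≤ H₂ := by
          rw [← conjBy_conjBy]
          exact le_trans (conjBy_mono g' hg) hg'
        rcases eq_or_lt_of_le h3 with heq | hlt
        · -- then conjBy g H₂ = H₁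
          apply hne g
          apply le_antisymm hg
          have : conjBy g' H₁ ≤ conjBy g' (conjBy g H₂) := by
            rw [conjBy_conjBy, heq]; exact hg'
          have h4 := conjBy_mono g'⁻¹ this
          rwa [conjBy_conjBy, conjBy_conjBy, mul_inv_cancel, conjBy_one, conjBy_one] at h4
        · exact hexp ⟨H₂, (g * g')⁻¹, h2, by
            have := conjBy_mono (g * g')⁻¹ hlt.le
            rw [conjBy_conjBy, mul_inv_cancel, conjBy_one] at this
            refine lt_of_le_of_ne this fun he => ?_
            have h5 := congrArg (conjBy (g * g')) he
            rw [conjBy_conjBy, inv_mul_cancel, conjBy_one] at h5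
            exact hlt.ne h5⟩
      obtain ⟨N, hN, hfin, hq⟩ := hsics H₂ H₁ h2 h1 hc'
      refine ⟨N, hN, hfin, fun q heq => hq q⁻¹ ?_⟩
      rw [← heq, conjBy_conjBy, mul_inv_cancel, conjBy_one]
end
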